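/- Assume unit costs. For every decision tree T evaluating the score classification function f: Σ_{j=1}^{B} C₁^j(σ¹) ≤ Σ_a C(T,a)·Pr(a), and Σ_{j=1}^{B} C₀^j(σ⁰) ≤ Σ_a C(T,a)·Pr(a), where the outer sums on the right range over all assignments a ∈ {0,1}^n. -/

import Mathlib

/-!
The threshold `Θ a` of the block of `a` (`α_j` ones for `C₁`) depends only on the number of ones
of `a`, and a decision tree for `f` sees at least `Θ a` ones on the path of `a`: otherwise the
assignment that agrees with `a` on the path and is zero elsewhere would reach the same leaf from a
lower block. The expected number of queries of the fixed order until `Θ` ones are seen is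
`∑ₖ Pr[fewer than Θ ones among its first k queries]`, and the tree's expected cost dominates the
same sum over its first `k` adaptive queries. So it suffices that for each `k` the `k` most likely
bits minimise this shortfall probability over all adaptive strategies. Among fixed query sets this
is an exchange argument: swapping a bit of the set for a more likely one pairs each assignment with
its image under the transposition, which has the same threshold. Adaptivity is removed by induction
on the tree, conditioning on the bits already answered. The zero side is the one side for the
complemented assignments, with probabilities `1 - p` and the mirrored tree.
-/

open Finset

/-- Number of true bits of an assignment. -/
def N1 {n : ℕ} (a : Fin n → Bool) : ℕ :=
  (Finset.univ.filter (fun i => a i = true)).card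

/-- Probability of an assignment. -/
noncomputable def pr {n : ℕ} (p : Fin n → ℝ) (a : Fin n → Bool) : ℝ :=
  ∏ i, if a i then p i else 1 - p i

/-- Least `k` such that the first `k` entries of `l` contain at least `m`
indices selected by `sel`. -/
noncomputable def stopCount {n : ℕ} (sel : Fin n → Bool) (m : ℕ) (l : List (Fin n)) : ℕ :=
  sInf {k | m ≤ ((l.take k).filter sel).length}

/-- `C₁^j(σ)`: expected number of queries, over the block `{a | αj ≤ N₁(a) < βj}`,
until `αj` ones have been observed, querying in the order `σ(0), σ(1), …`. -/
noncomputable def C1 {n : ℕ} (p : Fin n → ℝ) (αj βj : ℕ) (σ : Equiv.Perm (Fin n)) : ℝ :=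
  ∑ a ∈ Finset.univ.filter (fun a : Fin n → Bool => αj ≤ N1 a ∧ N1 a < βj),
    (stopCount a αj (List.ofFn (fun t => σ t)) : ℝ) * pr p a

/-- `C₀^j(σ)`: expected number of queries, over the block `{a | αj ≤ N₁(a) < βj}`,
until `n − βj + 1` zeros have been observed, querying in the order `σ(0), σ(1), …`. -/
noncomputable def C0 {n : ℕ} (p : Fin n → ℝ) (αj βj : ℕ) (σ : Equiv.Perm (Fin n)) : ℝ :=
  ∑ a ∈ Finset.univ.filter (fun a : Fin n → Bool => αj ≤ N1 a ∧ N1 a < βj),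
    (stopCount (fun i => !a i) (n + 1 - βj) (List.ofFn (fun t => σ t)) : ℝ) * pr p a
/-- Binary decision trees over `n` bits, with natural-number leaf labels. -/
inductive DTree (n : ℕ) : Type where
  | leaf : ℕ → DTree n
  | node : Fin n → DTree n → DTree n → DTree n

namespace DTree

/-- Output of the tree on assignment `a`. -/
def eval {n : ℕ} : DTree n → (Fin n → Bool) → ℕ
  | .leaf v, _ => v
  | .node i t0 t1, a => if a i then eval t1 a else eval t0 a

/-- Total cost of the queries made on assignment `a`. -/
noncomputable def cost {n : ℕ} (c : Fin n → ℝ) : DTree n → (Fin n → Bool) → ℝ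
  | .leaf _, _ => 0
  | .node i t0 t1, a => c i + (if a i then cost c t1 a else cost c t0 a)

/-- The list of indices queried on assignment `a`, in order. -/
def path {n : ℕ} : DTree n → (Fin n → Bool) → List (Fin n)
  | .leaf _, _ => []
  | .node i t0 t1, a => i :: (if a i then path t1 a else path t0 a)

/-- No index occurs twice on any root-to-leaf path (given already-used indices). -/
def Proper {n : ℕ} : DTree n → Finset (Fin n) → Prop
  | .leaf _, _ => True
  | .node i t0 t1, used =>
      i ∉ used ∧ Proper t0 (insert i used) ∧ Proper t1 (insert i used)

/-- Every root-to-leaf path queries all `n` indices (and no repeats). -/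
def Full {n : ℕ} : DTree n → Finset (Fin n) → Prop
  | .leaf _, used => used = Finset.univ
  | .node i t0 t1, used =>
      i ∉ used ∧ Full t0 (insert i used) ∧ Full t1 (insert i used)

end DTree

variable {n : ℕ}

section Assignments

def countTrue (a : Fin n → Bool) (S : Finset (Fin n)) : ℕ := #{i ∈ S | a i}

lemma countTrue_insert {S : Finset (Fin n)} {i : Fin n} (hi : i ∉ S) (a : Fin n → Bool) :
    countTrue a (insert i S) = countTrue a S + if a i then 1 else 0 := by
  unfold countTrue
  rw [filter_insert]
  split_ifs with ha
  · exact card_insert_of_notMem fun h => hi (mem_filter.mp h).1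
  · rfl

lemma countTrue_congr {S : Finset (Fin n)} {a b : Fin n → Bool} (h : ∀ i ∈ S, a i = b i) :
    countTrue a S = countTrue b S := by
  unfold countTrue
  rw [filter_congr fun i hi => by rw [h i hi]]

lemma countTrue_toFinset {l : List (Fin n)} (hl : l.Nodup) (a : Fin n → Bool) :
    countTrue a l.toFinset = l.countP a := by
  rw [countTrue, ← List.toFinset_filter, List.toFinset_card_of_nodup (hl.filter _),
    List.countP_eq_length_filter]

lemma countP_le_N1 {l : List (Fin n)} (hl : l.Nodup) (a : Fin n → Bool) : l.countP a ≤ N1 a := by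
  rw [← countTrue_toFinset hl]
  exact card_le_card (filter_subset_filter _ (subset_univ _))

lemma countP_eq_N1 {l : List (Fin n)} (hl : l.Nodup) (hl' : ∀ i, i ∈ l) (a : Fin n → Bool) :
    l.countP a = N1 a := by
  rw [← countTrue_toFinset hl,
    show l.toFinset = univ from eq_univ_of_forall fun i => by simp [hl' i]]
  rfl

lemma N1_comp_perm (a : Fin n → Bool) (e : Equiv.Perm (Fin n)) : N1 (a ∘ e) = N1 a :=
  card_bij' (fun i _ => e i) (fun i _ => e.symm i) (by simp) (by simp) (by simp) (by simp)

lemma N1_not (a : Fin n → Bool) : N1 (fun i => !a i) = n - N1 a := by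
  have hcompl : (univ.filter fun i => (!a i) = true) = (univ.filter fun i => a i = true)ᶜ := by
    ext i
    simp
  rw [N1, hcompl, card_compl, Fintype.card_fin, N1]

lemma sum_comp_not {M : Type*} [AddCommMonoid M] (g : (Fin n → Bool) → M) :
    ∑ a : Fin n → Bool, g (fun i => !a i) = ∑ a, g a :=
  Fintype.sum_bijective _
    (Function.Involutive.bijective (f := fun a : Fin n → Bool => fun i => !a i) fun a => by simp)
    _ _ fun _ => rfl

variable {p : Fin n → ℝ}

lemma pr_nonneg (hp : ∀ i, 0 ≤ p i ∧ p i ≤ 1) (a : Fin n → Bool) : 0 ≤ pr p a :=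
  prod_nonneg fun i _ => by split <;> linarith [hp i]

lemma pr_not (p : Fin n → ℝ) (a : Fin n → Bool) :
    pr p (fun i => !a i) = pr (fun i => 1 - p i) a :=
  prod_congr rfl fun i _ => by cases h : a i <;> simp [h]

lemma pr_le_pr_comp_swap (hp : ∀ i, 0 ≤ p i ∧ p i ≤ 1) {i i' : Fin n} (hii' : i ≠ i')
    (hpp : p i ≤ p i') {a : Fin n → Bool} (hai : a i = true) (hai' : a i' = false) :
    pr p a ≤ pr p (a ∘ Equiv.swap i i') := by
  set w : (Fin n → Bool) → Fin n → ℝ := fun x j => if x j then p j else 1 - p j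
  have hsplit : ∀ x, pr p x = w x i * w x i' * ∏ j ∈ {i, i'}ᶜ, w x j := fun x => by
    rw [← prod_pair hii', prod_mul_prod_compl]
    rfl
  have hrest : ∏ j ∈ {i, i'}ᶜ, w (a ∘ Equiv.swap i i') j = ∏ j ∈ {i, i'}ᶜ, w a j := by
    refine prod_congr rfl fun j hj => ?_
    simp only [mem_compl, mem_insert, mem_singleton, not_or] at hj
    simp [w, Equiv.swap_apply_of_ne_of_ne hj.1 hj.2]
  have hR : 0 ≤ ∏ j ∈ {i, i'}ᶜ, w a j := prod_nonneg fun j _ => by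
    simp only [w]; split <;> linarith [hp j]
  have hai_swap : (a ∘ Equiv.swap i i') i = false := by simpa using hai'
  have hai'_swap : (a ∘ Equiv.swap i i') i' = true := by simpa using hai
  rw [hsplit, hsplit, hrest]
  simp only [w, hai, hai', hai_swap, hai'_swap, if_true, Bool.false_eq_true, if_false]
  nlinarith [mul_nonneg hR (sub_nonneg.mpr hpp)]

end Assignments

lemma stopCount_eq_card {sel : Fin n → Bool} {m N : ℕ} {l : List (Fin n)}
    (hN : m ≤ (l.take N).countP sel) :
    stopCount sel m l = #{k ∈ range N | (l.take k).countP sel < m} := by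
  have hmem : ∀ k, k ∈ {k | m ≤ ((l.take k).filter sel).length} ↔ m ≤ (l.take k).countP sel :=
    fun k => by rw [List.countP_eq_length_filter]; rfl
  have hstop : m ≤ (l.take (stopCount sel m l)).countP sel :=
    (hmem _).mp (Nat.sInf_mem ⟨N, (hmem N).mpr hN⟩)
  have hle : stopCount sel m l ≤ N := Nat.sInf_le ((hmem N).mpr hN)
  have hlt : ∀ k, (l.take k).countP sel < m ↔ k < stopCount sel m l := fun k => by
    refine ⟨fun hk => ?_, fun hk => ?_⟩
    · by_contra! h
      exact hk.not_ge (hstop.trans (List.take_sublist_take_left h).countP_le)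
    · exact lt_of_not_ge fun h => Nat.notMem_of_lt_sInf hk ((hmem k).mpr h)
  have hrange : {k ∈ range N | k < stopCount sel m l} = range (stopCount sel m l) := by
    ext k
    simp only [mem_filter, mem_range]
    omega
  rw [filter_congr fun k _ => hlt k, hrange, card_range]

namespace DTree

lemma Proper.path_nodup_notMem {T : DTree n} {used : Finset (Fin n)} (hT : T.Proper used)
    (a : Fin n → Bool) : (T.path a).Nodup ∧ ∀ i ∈ T.path a, i ∉ used := by
  induction T generalizing used with
  | leaf => simp [path]
  | node i t0 t1 ih0 ih1 =>
    obtain ⟨hi, h0, h1⟩ := hT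
    have hcons : ∀ l : List (Fin n), l.Nodup ∧ (∀ j ∈ l, j ∉ insert i used) →
        (i :: l).Nodup ∧ ∀ j ∈ i :: l, j ∉ used := by
      rintro l ⟨hl, hlu⟩
      simp only [List.nodup_cons, List.mem_cons, forall_eq_or_imp]
      exact ⟨⟨fun h => hlu i h (mem_insert_self _ _), hl⟩, hi,
        fun j hj hju => hlu j hj (mem_insert_of_mem hju)⟩
    simp only [path]
    split
    · exact hcons _ (ih1 h1)
    · exact hcons _ (ih0 h0)

lemma eval_eq_of_eqOn_path (T : DTree n) {a a' : Fin n → Bool} (h : ∀ i ∈ T.path a, a' i = a i) :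
    T.eval a' = T.eval a := by
  induction T with
  | leaf => rfl
  | node i t0 t1 ih0 ih1 =>
    have hi : a' i = a i := h i List.mem_cons_self
    simp only [eval, hi]
    split
    · exact ih1 fun j hj => h j (by simp_all [path])
    · exact ih0 fun j hj => h j (by simp_all [path])

lemma cost_eq_length {c : Fin n → ℝ} (hc : ∀ i, c i = 1) (T : DTree n) (a : Fin n → Bool) :
    T.cost c a = (T.path a).length := by
  induction T with
  | leaf => simp [cost, path]
  | node i t0 t1 ih0 ih1 =>
    simp only [cost, path, hc, List.length_cons, Nat.cast_add, Nat.cast_one]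
    split <;> simp [ih0, ih1, add_comm]

lemma Proper.exists_N1_eq_countP_path {T : DTree n} (hT : T.Proper ∅) (a : Fin n → Bool) :
    ∃ a', T.eval a' = T.eval a ∧ N1 a' = (T.path a).countP a := by
  refine ⟨fun i => decide (i ∈ T.path a) && a i,
    T.eval_eq_of_eqOn_path fun i hi => by simp [hi], ?_⟩
  rw [← countTrue_toFinset (hT.path_nodup_notMem a).1, N1, countTrue]
  congr 1
  ext i
  simp

def mirror : DTree n → DTree n
  | .leaf v => .leaf v
  | .node i t0 t1 => .node i t1.mirror t0.mirror

lemma path_mirror (T : DTree n) (a : Fin n → Bool) : T.mirror.path a = T.path (fun i => !a i) := by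
  induction T with
  | leaf => rfl
  | node i t0 t1 ih0 ih1 => cases h : a i <;> simp [mirror, path, h, ih0, ih1]

lemma eval_mirror (T : DTree n) (a : Fin n → Bool) : T.mirror.eval a = T.eval (fun i => !a i) := by
  induction T with
  | leaf => rfl
  | node i t0 t1 ih0 ih1 => cases h : a i <;> simp [mirror, eval, h, ih0, ih1]

lemma Proper.mirror {T : DTree n} {used : Finset (Fin n)} (hT : T.Proper used) :
    T.mirror.Proper used := by
  induction T generalizing used with
  | leaf => trivial
  | node i t0 t1 ih0 ih1 => exact ⟨hT.1, ih1 hT.2.2, ih0 hT.2.1⟩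

end DTree

section Exchange

variable {p : Fin n → ℝ}

noncomputable def shortfallMass (p : Fin n → ℝ) (D : Finset (Fin n → Bool))
    (Θ x : (Fin n → Bool) → ℕ) : ℝ :=
  ∑ a ∈ D, if x a < Θ a then pr p a else 0

def SwapClosed (used : Finset (Fin n)) (D : Finset (Fin n → Bool)) : Prop :=
  ∀ a ∈ D, ∀ i ∉ used, ∀ i' ∉ used, a ∘ Equiv.swap i i' ∈ D

lemma swapClosed_univ (used : Finset (Fin n)) : SwapClosed used univ :=
  fun _ _ _ _ _ _ => mem_univ _

lemma SwapClosed.filter {used : Finset (Fin n)} {D : Finset (Fin n → Bool)} (hD : SwapClosed used D)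
    (i : Fin n) (v : Bool) : SwapClosed (insert i used) {a ∈ D | a i = v} := by
  intro a ha j hj j' hj'
  rw [mem_insert, not_or] at hj hj'
  rw [mem_filter] at ha ⊢
  refine ⟨hD a ha.1 j hj.2 j' hj'.2, ?_⟩
  rw [Function.comp_apply, Equiv.swap_apply_of_ne_of_ne (Ne.symm hj.1) (Ne.symm hj'.1), ha.2]

lemma shortfallMass_congr {D : Finset (Fin n → Bool)} {Θ Θ' x x' : (Fin n → Bool) → ℕ}
    (h : ∀ a ∈ D, x a < Θ a ↔ x' a < Θ' a) : shortfallMass p D Θ x = shortfallMass p D Θ' x' :=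
  sum_congr rfl fun a ha => by simp only [h a ha]

lemma shortfallMass_anti (hp : ∀ i, 0 ≤ p i ∧ p i ≤ 1) {D : Finset (Fin n → Bool)}
    {Θ x x' : (Fin n → Bool) → ℕ} (h : ∀ a ∈ D, x a ≤ x' a) :
    shortfallMass p D Θ x' ≤ shortfallMass p D Θ x :=
  sum_le_sum fun a ha => by
    split_ifs with h1 h2
    · rfl
    · exact absurd ((h a ha).trans_lt h1) h2
    · exact pr_nonneg hp a
    · rfl

lemma shortfallMass_split (D : Finset (Fin n → Bool)) (Θ x : (Fin n → Bool) → ℕ) (i : Fin n) :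
    shortfallMass p D Θ x =
      shortfallMass p {a ∈ D | a i = true} Θ x + shortfallMass p {a ∈ D | a i = false} Θ x := by
  simp only [shortfallMass, ← Bool.not_eq_true]
  exact (sum_filter_add_sum_filter_not _ _ _).symm

/-- Exchanging `i` for a more likely `i'` in the queried set pairs each assignment with its
image under the transposition `(i i')`; the pair has a common threshold, and on it the exchange
can only move mass from the less likely assignment to the more likely one. -/
lemma shortfallMass_exchange_le (hp : ∀ i, 0 ≤ p i ∧ p i ≤ 1) {used : Finset (Fin n)}
    {D : Finset (Fin n → Bool)} (hD : SwapClosed used D) {Θ : (Fin n → Bool) → ℕ}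
    (hΘ : Θ.FactorsThrough N1) {S : Finset (Fin n)} {i i' : Fin n} (hiS : i ∈ S) (hi'S : i' ∉ S)
    (hiu : i ∉ used) (hi'u : i' ∉ used) (hpp : p i ≤ p i') :
    shortfallMass p D Θ (countTrue · (insert i' (S.erase i))) ≤
      shortfallMass p D Θ (countTrue · S) := by
  have hii' : i ≠ i' := fun h => hi'S (h ▸ hiS)
  set τ : (Fin n → Bool) → Fin n → Bool := fun a => a ∘ Equiv.swap i i'
  have hττ : ∀ a, τ (τ a) = a := fun a => by ext; simp [τ]
  set g : (Fin n → Bool) → ℝ := fun a =>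
    (if countTrue a S < Θ a then pr p a else 0) -
      if countTrue a (insert i' (S.erase i)) < Θ a then pr p a else 0
  have hpair : ∀ a, 0 ≤ g a + g (τ a) := fun a => by
    have hΘτ : Θ (τ a) = Θ a := hΘ (N1_comp_perm a _)
    have hi'e : i' ∉ S.erase i := fun h => hi'S (mem_of_mem_erase h)
    have hrest : countTrue (τ a) (S.erase i) = countTrue a (S.erase i) :=
      countTrue_congr fun j hj => congrArg a (Equiv.swap_apply_of_ne_of_ne (ne_of_mem_erase hj)
        (by rintro rfl; exact hi'S (mem_of_mem_erase hj)))
    have hτi : τ a i = a i' := by simp [τ]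
    have hτi' : τ a i' = a i := by simp [τ]
    have hS : ∀ x, countTrue x S = countTrue x (S.erase i) + if x i then 1 else 0 := fun x => by
      conv_lhs => rw [← insert_erase hiS]
      exact countTrue_insert (notMem_erase i S) x
    simp only [g, hΘτ, hS, countTrue_insert hi'e, hrest, hτi, hτi']
    cases hai : a i <;> cases hai' : a i' <;> simp only [if_true, Bool.false_eq_true, if_false]
    · linarith
    · have := pr_le_pr_comp_swap hp hii' hpp (a := τ a) (by rw [hτi, hai']) (by rw [hτi', hai])
      rw [show τ a ∘ Equiv.swap i i' = a from hττ a] at this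
      split_ifs <;> first | omega | linarith
    · have := pr_le_pr_comp_swap hp hii' hpp hai hai'
      split_ifs <;> first | omega | linarith
    · linarith
  have hτsum : ∑ a ∈ D, g (τ a) = ∑ a ∈ D, g a :=
    sum_nbij' τ τ (fun a ha => hD a ha i hiu i' hi'u) (fun a ha => hD a ha i hiu i' hi'u)
      (fun a _ => hττ a) (fun a _ => hττ a) fun _ _ => rfl
  have hsum := sum_nonneg fun a (_ : a ∈ D) => hpair a
  rw [sum_add_distrib, hτsum] at hsum
  have : 0 ≤ ∑ a ∈ D, g a := by linarith
  simpa only [shortfallMass, g, sum_sub_distrib, sub_nonneg] using this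

end Exchange

section SortedQueries

variable {p : Fin n → ℝ} {L : List (Fin n)}

def freshPrefix (L : List (Fin n)) (used : Finset (Fin n)) (k : ℕ) : Finset (Fin n) :=
  ((L.filter (· ∉ used)).take k).toFinset

lemma notMem_of_mem_freshPrefix {used : Finset (Fin n)} {k : ℕ} {j : Fin n}
    (hj : j ∈ freshPrefix L used k) : j ∉ used := by
  simpa using (List.mem_filter.mp (List.mem_of_mem_take (List.mem_toFinset.mp hj))).2

lemma card_freshPrefix (hLn : L.Nodup) (hLm : ∀ i, i ∈ L) {used : Finset (Fin n)} {k : ℕ}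
    (hk : k + #used ≤ n) : #(freshPrefix L used k) = k := by
  have hF : ((L.filter (· ∉ used)).length) = n - #used := by
    rw [← List.toFinset_card_of_nodup (hLn.filter _),
      show (L.filter (· ∉ used)).toFinset = usedᶜ by ext j; simp [hLm j],
      card_compl, Fintype.card_fin]
  rw [freshPrefix, List.toFinset_card_of_nodup ((List.take_sublist _ _).nodup (hLn.filter _)),
    List.length_take, hF]
  omega

lemma le_of_mem_freshPrefix (hLm : ∀ i, i ∈ L) (hLp : L.Pairwise fun x y => p y ≤ p x)
    {used : Finset (Fin n)} {k : ℕ} {i i' : Fin n} (hi' : i' ∈ freshPrefix L used k)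
    (hiu : i ∉ used) (hi : i ∉ freshPrefix L used k) : p i ≤ p i' := by
  set F := L.filter (· ∉ used)
  have hpw : (F.take k ++ F.drop k).Pairwise fun x y => p y ≤ p x := by
    rw [List.take_append_drop]
    exact hLp.sublist List.filter_sublist
  have hiF : i ∈ F.take k ++ F.drop k := by
    rw [List.take_append_drop]
    simpa [F] using ⟨hLm i, hiu⟩
  have hidrop : i ∈ F.drop k :=
    (List.mem_append.mp hiF).resolve_left fun h => hi (List.mem_toFinset.mpr h)
  exact (List.pairwise_append.mp hpw).2.2 i' (List.mem_toFinset.mp hi') i hidrop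

lemma shortfallMass_freshPrefix_le (hp : ∀ i, 0 ≤ p i ∧ p i ≤ 1) (hLn : L.Nodup)
    (hLm : ∀ i, i ∈ L) (hLp : L.Pairwise fun x y => p y ≤ p x) {used : Finset (Fin n)}
    {D : Finset (Fin n → Bool)} (hD : SwapClosed used D) {Θ : (Fin n → Bool) → ℕ}
    (hΘ : Θ.FactorsThrough N1) {k : ℕ} (hk : k + #used ≤ n) {S : Finset (Fin n)}
    (hSu : ∀ j ∈ S, j ∉ used) (hSk : #S = k) :
    shortfallMass p D Θ (countTrue · (freshPrefix L used k)) ≤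
      shortfallMass p D Θ (countTrue · S) := by
  set F := freshPrefix L used k
  have hFk : #F = k := card_freshPrefix hLn hLm hk
  suffices h : ∀ d (S : Finset (Fin n)), (∀ j ∈ S, j ∉ used) → #S = k → #(S \ F) = d →
      shortfallMass p D Θ (countTrue · F) ≤ shortfallMass p D Θ (countTrue · S) from
    h _ S hSu hSk rfl
  intro d
  induction d with
  | zero =>
    intro S _ hSk hd
    rw [eq_of_subset_of_card_le (sdiff_eq_empty_iff_subset.mp (card_eq_zero.mp hd)) (by omega)]
  | succ d ih =>
    intro S hSu hSk hd
    obtain ⟨i, hi⟩ := card_pos.mp (by omega : 0 < #(S \ F))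
    obtain ⟨i', hi'⟩ : (F \ S).Nonempty := sdiff_nonempty.mpr fun hFS => (mem_sdiff.mp hi).2 <| by
      rw [eq_of_subset_of_card_le hFS (by omega)]
      exact (mem_sdiff.mp hi).1
    rw [mem_sdiff] at hi hi'
    have hi'e : i' ∉ S.erase i := fun h => hi'.2 (mem_of_mem_erase h)
    have hdiff : insert i' (S.erase i) \ F = (S \ F).erase i := by
      ext j
      simp only [mem_sdiff, mem_insert, mem_erase]
      constructor
      · rintro ⟨rfl | h, hjF⟩
        exacts [absurd hi'.1 hjF, ⟨h.1, h.2, hjF⟩]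
      · rintro ⟨hji, hjS, hjF⟩
        exact ⟨Or.inr ⟨hji, hjS⟩, hjF⟩
    refine (ih (insert i' (S.erase i)) ?_ ?_ ?_).trans
      (shortfallMass_exchange_le hp hD hΘ hi.1 hi'.2 (hSu i hi.1) (notMem_of_mem_freshPrefix hi'.1)
        (le_of_mem_freshPrefix hLm hLp hi'.1 (hSu i hi.1) hi.2))
    · simp only [mem_insert]
      rintro j (rfl | hj)
      exacts [notMem_of_mem_freshPrefix hi'.1, hSu j (mem_of_mem_erase hj)]
    · rw [card_insert_of_notMem hi'e, card_erase_of_mem hi.1]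
      have := card_pos.mpr ⟨i, hi.1⟩
      omega
    · rw [hdiff, card_erase_of_mem (mem_sdiff.mpr hi), hd]
      rfl

/-- At the root query `i` each branch is handled by induction; `i` together with the branches'
common query set is then one more set of `k + 1` fresh bits to compare with the most likely ones. -/
lemma shortfallMass_freshPrefix_le_path (hp : ∀ i, 0 ≤ p i ∧ p i ≤ 1) (hLn : L.Nodup)
    (hLm : ∀ i, i ∈ L) (hLp : L.Pairwise fun x y => p y ≤ p x) {U : DTree n}
    {used : Finset (Fin n)} (hU : U.Proper used) {D : Finset (Fin n → Bool)}
    (hD : SwapClosed used D) {Θ : (Fin n → Bool) → ℕ} (hΘ : Θ.FactorsThrough N1) {k : ℕ}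
    (hk : k + #used ≤ n) :
    shortfallMass p D Θ (countTrue · (freshPrefix L used k)) ≤
      shortfallMass p D Θ (fun a => ((U.path a).take k).countP a) := by
  induction U generalizing used D Θ k with
  | leaf => exact shortfallMass_anti hp fun a _ => by simp [DTree.path]
  | node i t0 t1 ih0 ih1 =>
    obtain ⟨hi, h0, h1⟩ := hU
    cases k with
    | zero => exact shortfallMass_anti hp fun a _ => by simp
    | succ k =>
      have hk' : k + #(insert i used) ≤ n := by rw [card_insert_of_notMem hi]; omega
      set S := freshPrefix L (insert i used) k
      have hSu : ∀ j ∈ S, j ∉ insert i used := fun j hj => notMem_of_mem_freshPrefix hj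
      have hiS : i ∉ S := fun h => hSu i h (mem_insert_self i used)
      calc shortfallMass p D Θ (countTrue · (freshPrefix L used (k + 1)))
          ≤ shortfallMass p D Θ (countTrue · (insert i S)) := by
            refine shortfallMass_freshPrefix_le hp hLn hLm hLp hD hΘ hk ?_ ?_
            · simp only [mem_insert, forall_eq_or_imp]
              exact ⟨hi, fun j hj hju => hSu j hj (mem_insert_of_mem hju)⟩
            · rw [card_insert_of_notMem hiS, card_freshPrefix hLn hLm hk']
        _ = shortfallMass p {a ∈ D | a i = true} (Θ · - 1) (countTrue · S) +
              shortfallMass p {a ∈ D | a i = false} Θ (countTrue · S) := by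
            rw [shortfallMass_split D Θ _ i]
            congr 1
            · exact shortfallMass_congr fun a ha => by
                simp only [countTrue_insert hiS, (mem_filter.mp ha).2, if_true]
                omega
            · exact shortfallMass_congr fun a ha => by
                simp [countTrue_insert hiS, (mem_filter.mp ha).2]
        _ ≤ shortfallMass p {a ∈ D | a i = true} (Θ · - 1)
                (fun a => ((t1.path a).take k).countP a) +
              shortfallMass p {a ∈ D | a i = false} Θ (fun a => ((t0.path a).take k).countP a) :=
            add_le_add (ih1 h1 (hD.filter i true) (fun a b h => by simp only [hΘ h]) hk')
              (ih0 h0 (hD.filter i false) hΘ hk')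
        _ = shortfallMass p D Θ
              (fun a => (((DTree.node i t0 t1).path a).take (k + 1)).countP a) := by
            rw [shortfallMass_split D Θ _ i]
            congr 1
            · exact shortfallMass_congr fun a ha => by
                simp only [DTree.path, (mem_filter.mp ha).2, if_true, List.take_succ_cons,
                  List.countP_cons]
                omega
            · exact shortfallMass_congr fun a ha => by simp [DTree.path, (mem_filter.mp ha).2]

lemma freshPrefix_empty (L : List (Fin n)) (k : ℕ) : freshPrefix L ∅ k = (L.take k).toFinset := by
  simp [freshPrefix]

lemma sum_card_mul_pr_eq_sum_shortfallMass (p : Fin n → ℝ) (s : Finset ℕ)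
    (Θ : (Fin n → Bool) → ℕ) (x : ℕ → (Fin n → Bool) → ℕ) :
    ∑ a, (#{k ∈ s | x k a < Θ a} : ℝ) * pr p a = ∑ k ∈ s, shortfallMass p univ Θ (x k) := by
  simp only [shortfallMass, card_filter, Nat.cast_sum, sum_mul]
  rw [sum_comm]
  refine sum_congr rfl fun k _ => sum_congr rfl fun a _ => ?_
  split_ifs <;> simp

lemma card_shortfall_le_length {l : List (Fin n)} {a : Fin n → Bool} {m : ℕ}
    (hm : m ≤ l.countP a) (N : ℕ) : #{k ∈ range N | (l.take k).countP a < m} ≤ l.length := by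
  refine (card_le_card fun k hk => ?_).trans (card_range l.length).le
  rw [mem_filter] at hk
  rw [mem_range]
  by_contra h
  rw [List.take_of_length_le (not_lt.mp h)] at hk
  omega

theorem sum_stopCount_mul_pr_le (hp : ∀ i, 0 ≤ p i ∧ p i ≤ 1)
    {σ : Equiv.Perm (Fin n)} (hσ : Antitone (p ∘ σ)) {Θ : (Fin n → Bool) → ℕ}
    (hΘ : Θ.FactorsThrough N1) {U : DTree n} (hU : U.Proper ∅)
    (hUΘ : ∀ a, Θ a ≤ (U.path a).countP a) :
    ∑ a, (stopCount a (Θ a) (List.ofFn fun t => σ t) : ℝ) * pr p a ≤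
      ∑ a, ((U.path a).length : ℝ) * pr p a := by
  set L := List.ofFn fun t => σ t
  have hLn : L.Nodup := List.nodup_ofFn.mpr σ.injective
  have hLm : ∀ i, i ∈ L := fun i => List.mem_ofFn.mpr ⟨σ.symm i, σ.apply_symm_apply i⟩
  have hLp : L.Pairwise fun x y => p y ≤ p x := List.pairwise_ofFn.mpr fun s t hst => hσ hst.le
  have hstop : ∀ a, stopCount a (Θ a) L = #{k ∈ range n | (L.take k).countP a < Θ a} := fun a =>
    stopCount_eq_card <| by
      rw [List.take_of_length_le (by simp [L]), countP_eq_N1 hLn hLm]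
      exact (hUΘ a).trans (countP_le_N1 (hU.path_nodup_notMem a).1 a)
  calc ∑ a, (stopCount a (Θ a) L : ℝ) * pr p a
      = ∑ k ∈ range n, shortfallMass p univ Θ (fun a => (L.take k).countP a) := by
        simp only [hstop]
        exact sum_card_mul_pr_eq_sum_shortfallMass _ _ _ _
    _ ≤ ∑ k ∈ range n, shortfallMass p univ Θ (fun a => ((U.path a).take k).countP a) :=
        sum_le_sum fun k hk => by
          have := shortfallMass_freshPrefix_le_path hp hLn hLm hLp hU (swapClosed_univ ∅) hΘ
            (k := k) (by simpa using (mem_range.mp hk).le)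
          simpa only [freshPrefix_empty, countTrue_toFinset ((List.take_sublist _ _).nodup hLn)]
            using this
    _ = ∑ a, (#{k ∈ range n | ((U.path a).take k).countP a < Θ a} : ℝ) * pr p a :=
        (sum_card_mul_pr_eq_sum_shortfallMass _ _ _ _).symm
    _ ≤ ∑ a, ((U.path a).length : ℝ) * pr p a :=
        sum_le_sum fun a _ => mul_le_mul_of_nonneg_right
          (by exact_mod_cast card_shortfall_le_length (hUΘ a) n) (pr_nonneg hp a)

end SortedQueries

section ScoreClassification

variable {B : ℕ} {α : ℕ → ℕ} {f : (Fin n → Bool) → ℕ}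

lemma apply_succ_le_of_lt (hmono : ∀ j, 1 ≤ j → j ≤ B → α j < α (j + 1)) {j j' : ℕ}
    (hj : 1 ≤ j) (hjj' : j < j') (hj' : j' ≤ B + 1) : α (j + 1) ≤ α j' := by
  induction j', hjj' using Nat.le_induction with
  | base => rfl
  | succ m hm ih => exact (ih (by omega)).trans (hmono m (by omega) (by omega)).le

lemma mem_block_iff (hmono : ∀ j, 1 ≤ j → j ≤ B → α j < α (j + 1))
    (hf : ∀ a, 1 ≤ f a ∧ f a ≤ B ∧ α (f a) ≤ N1 a ∧ N1 a < α (f a + 1)) (j : ℕ) (a : Fin n → Bool) :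
    (j ∈ Icc 1 B ∧ α j ≤ N1 a ∧ N1 a < α (j + 1)) ↔ j = f a := by
  obtain ⟨hf1, hfB, hflo, hfhi⟩ := hf a
  refine ⟨fun ⟨hj, hlo, hhi⟩ => ?_, fun h => h ▸ ⟨mem_Icc.mpr ⟨hf1, hfB⟩, hflo, hfhi⟩⟩
  obtain ⟨hj1, hjB⟩ := mem_Icc.mp hj
  by_contra hne
  rcases Nat.lt_or_gt_of_ne hne with h | h
  · have := apply_succ_le_of_lt hmono hj1 h (by omega)
    omega
  · have := apply_succ_le_of_lt hmono hf1 h (by omega)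
    omega

lemma factorsThrough_N1 (hmono : ∀ j, 1 ≤ j → j ≤ B → α j < α (j + 1))
    (hf : ∀ a, 1 ≤ f a ∧ f a ≤ B ∧ α (f a) ≤ N1 a ∧ N1 a < α (f a + 1)) : f.FactorsThrough N1 :=
  fun a b hab => (mem_block_iff hmono hf (f a) b).mp (by simpa [← hab, and_assoc] using hf a)

lemma sum_blocks_eq (hmono : ∀ j, 1 ≤ j → j ≤ B → α j < α (j + 1))
    (hf : ∀ a, 1 ≤ f a ∧ f a ≤ B ∧ α (f a) ≤ N1 a ∧ N1 a < α (f a + 1))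
    (g : ℕ → (Fin n → Bool) → ℝ) :
    ∑ j ∈ Icc 1 B, ∑ a ∈ univ.filter (fun a : Fin n → Bool => α j ≤ N1 a ∧ N1 a < α (j + 1)),
      g j a = ∑ a, g (f a) a := by
  rw [sum_comm' (t' := univ) (s' := fun a => {f a}) fun j a => by
    simpa [and_assoc] using mem_block_iff hmono hf j a]
  simp

variable {p : Fin n → ℝ}

theorem sum_C1_le (hp : ∀ i, 0 ≤ p i ∧ p i ≤ 1) (hmono : ∀ j, 1 ≤ j → j ≤ B → α j < α (j + 1))
    (hf : ∀ a, 1 ≤ f a ∧ f a ≤ B ∧ α (f a) ≤ N1 a ∧ N1 a < α (f a + 1))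
    {σ : Equiv.Perm (Fin n)} (hσ : Antitone (p ∘ σ)) {T : DTree n} (hT : T.Proper ∅)
    (hTf : ∀ a, T.eval a = f a) :
    ∑ j ∈ Icc 1 B, C1 p (α j) (α (j + 1)) σ ≤ ∑ a, ((T.path a).length : ℝ) * pr p a := by
  rw [show ∑ j ∈ Icc 1 B, C1 p (α j) (α (j + 1)) σ =
      ∑ a, (stopCount a (α (f a)) (List.ofFn fun t => σ t) : ℝ) * pr p a from
    sum_blocks_eq hmono hf _]
  refine sum_stopCount_mul_pr_le hp hσ (fun a b h => congrArg α (factorsThrough_N1 hmono hf h)) hT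
    fun a => ?_
  obtain ⟨a', heval, hN1⟩ := hT.exists_N1_eq_countP_path a
  rw [← hN1, ← hTf, ← heval, hTf]
  exact (hf a').2.2.1

theorem sum_C0_le (hp : ∀ i, 0 ≤ p i ∧ p i ≤ 1) (hmono : ∀ j, 1 ≤ j → j ≤ B → α j < α (j + 1))
    (hf : ∀ a, 1 ≤ f a ∧ f a ≤ B ∧ α (f a) ≤ N1 a ∧ N1 a < α (f a + 1))
    {σ : Equiv.Perm (Fin n)} (hσ : Monotone (p ∘ σ)) {T : DTree n} (hT : T.Proper ∅)
    (hTf : ∀ a, T.eval a = f a) :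
    ∑ j ∈ Icc 1 B, C0 p (α j) (α (j + 1)) σ ≤ ∑ a, ((T.path a).length : ℝ) * pr p a := by
  set q : Fin n → ℝ := fun i => 1 - p i
  have hq : ∀ i, 0 ≤ q i ∧ q i ≤ 1 := fun i => ⟨by linarith [hp i], by linarith [hp i]⟩
  have hqσ : Antitone (q ∘ σ) := fun s t hst => by
    have : p (σ s) ≤ p (σ t) := hσ hst
    simp only [Function.comp_apply, q]
    linarith
  set Θ : (Fin n → Bool) → ℕ := fun b => n + 1 - α (f (fun i => !b i) + 1)
  have hΘ : Θ.FactorsThrough N1 := fun b b' h => by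
    simp only [Θ, factorsThrough_N1 hmono hf (show N1 (fun i => !b i) = N1 (fun i => !b' i) by
      rw [N1_not, N1_not, h])]
  have hTΘ : ∀ b, Θ b ≤ (T.mirror.path b).countP b := fun b => by
    obtain ⟨b', heval, hN1⟩ := hT.mirror.exists_N1_eq_countP_path b
    rw [DTree.eval_mirror, DTree.eval_mirror, hTf, hTf] at heval
    have := (hf fun i => !b' i).2.2.2
    rw [heval, N1_not, hN1] at this
    simp only [Θ]
    omega
  calc ∑ j ∈ Icc 1 B, C0 p (α j) (α (j + 1)) σ
      = ∑ a, (stopCount (fun i => !a i) (n + 1 - α (f a + 1)) (List.ofFn fun t => σ t) : ℝ) *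
          pr p a := sum_blocks_eq hmono hf _
    _ = ∑ b, (stopCount b (Θ b) (List.ofFn fun t => σ t) : ℝ) * pr q b := by
        rw [← sum_comp_not]
        simp [Θ, q, pr_not]
    _ ≤ ∑ b, ((T.mirror.path b).length : ℝ) * pr q b :=
        sum_stopCount_mul_pr_le hq hqσ hΘ hT.mirror hTΘ
    _ = ∑ a, ((T.path a).length : ℝ) * pr p a := by
        rw [← sum_comp_not]
        simp [q, DTree.path_mirror, pr_not]

end ScoreClassification

theorem stmt5_general {n : ℕ} (p c : Fin n → ℝ)
    (hp : ∀ i, 0 < p i ∧ p i < 1) (hc : ∀ i, c i = 1)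
    (B : ℕ) (α : ℕ → ℕ)
    (hmono : ∀ j, 1 ≤ j → j ≤ B → α j < α (j + 1))
    (f : (Fin n → Bool) → ℕ)
    (hf : ∀ a, 1 ≤ f a ∧ f a ≤ B ∧ α (f a) ≤ N1 a ∧ N1 a < α (f a + 1))
    (σ1 σ0 : Equiv.Perm (Fin n))
    (hσ1 : ∀ s t : Fin n, s ≤ t → p (σ1 t) ≤ p (σ1 s))
    (hσ0 : ∀ s t : Fin n, s ≤ t → p (σ0 s) ≤ p (σ0 t))
    (T : DTree n) (hTp : T.Proper ∅) (hTe : ∀ a, T.eval a = f a) :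
    (∑ j ∈ Finset.Icc 1 B, C1 p (α j) (α (j + 1)) σ1
      ≤ ∑ a : Fin n → Bool, T.cost c a * pr p a) ∧
    (∑ j ∈ Finset.Icc 1 B, C0 p (α j) (α (j + 1)) σ0
      ≤ ∑ a : Fin n → Bool, T.cost c a * pr p a) := by
  have hp' : ∀ i, 0 ≤ p i ∧ p i ≤ 1 := fun i => ⟨(hp i).1.le, (hp i).2.le⟩
  simp only [T.cost_eq_length hc]
  exact ⟨sum_C1_le hp' hmono hf hσ1 hTp hTe, sum_C0_le hp' hmono hf hσ0 hTp hTe⟩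

theorem stmt5 {n : ℕ} (hn : 1 ≤ n) (p c : Fin n → ℝ)
    (hp : ∀ i, 0 < p i ∧ p i < 1) (hc : ∀ i, c i = 1)
    (B : ℕ) (hB : 2 ≤ B) (α : ℕ → ℕ)
    (hα1 : α 1 = 0) (hαtop : α (B + 1) = n + 1)
    (hmono : ∀ j, 1 ≤ j → j ≤ B → α j < α (j + 1))
    (f : (Fin n → Bool) → ℕ)
    (hf : ∀ a, 1 ≤ f a ∧ f a ≤ B ∧ α (f a) ≤ N1 a ∧ N1 a < α (f a + 1))
    (σ1 σ0 : Equiv.Perm (Fin n))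
    (hσ1 : ∀ s t : Fin n, s ≤ t → p (σ1 t) ≤ p (σ1 s))
    (hσ0 : ∀ s t : Fin n, s ≤ t → p (σ0 s) ≤ p (σ0 t))
    (T : DTree n) (hTp : T.Proper ∅) (hTe : ∀ a, T.eval a = f a) :
    (∑ j ∈ Finset.Icc 1 B, C1 p (α j) (α (j + 1)) σ1
      ≤ ∑ a : Fin n → Bool, T.cost c a * pr p a) ∧
    (∑ j ∈ Finset.Icc 1 B, C0 p (α j) (α (j + 1)) σ0
      ≤ ∑ a : Fin n → Bool, T.cost c a * pr p a) :=
  stmt5_general p c hp hc B α hmono f hf σ1 σ0 hσ1 hσ0 T hTp hTe
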